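/- arXiv:2305.18024 — 9 statements merged into one kernel-verified Lean document; each statement's English description precedes it below -/
import Mathlib

section
/- Let there be m candidates and n agents, where each agent i assigns a Borda valuation to the candidates at round t: that is, v_i^t is a bijection from the set of candidates C (with |C| = m) to {0, 1, ..., m-1}. Then for any vector x of n non-negative integers with sum equal to m-1, there exists a candidate c such that v_i^t(c) >= x_i for every agent i. -/
theorem stmt_2 (m n : ℕ) (hm : 0 < m)
    (v : Fin n → (Fin m ≃ Fin m)) (x : Fin n → ℕ)
    (hx : ∑ i, x i = m - 1) :
    ∃ c : Fin m, ∀ i : Fin n, x i ≤ ((v i c : Fin m) : ℕ) := by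
  by_contra h
  push_neg at h
  set B : Fin n → Finset (Fin m) := fun i =>
    Finset.univ.filter (fun c => ((v i c : Fin m) : ℕ) < x i) with hB
  have hcard : ∀ i, (B i).card ≤ x i := by
    intro i
    have himg : B i = Finset.image (v i).symm
        (Finset.univ.filter (fun j : Fin m => (j : ℕ) < x i)) := by
      ext c
      simp [hB, Finset.mem_image]
      constructor
      · intro hc; exact ⟨v i c, hc, by simp⟩
      · rintro ⟨j, hj, rfl⟩; simpa using hj
    rw [himg, Finset.card_image_of_injective _ (v i).symm.injective]
    calc (Finset.univ.filter (fun j : Fin m => (j : ℕ) < x i)).card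
        ≤ (Finset.range (x i)).card := by
          refine Finset.card_le_card_of_injOn (fun j => (j : ℕ))
            (fun j hj => ?_) (fun a _ b _ hab => Fin.ext hab)
          simp at hj ⊢; exact hj
      _ = x i := Finset.card_range _
  have hcover : (Finset.univ : Finset (Fin m)) ⊆ Finset.univ.biUnion B := by
    intro c _
    obtain ⟨i, hi⟩ := h c
    exact Finset.mem_biUnion.mpr ⟨i, Finset.mem_univ i, by simp [hB, hi]⟩
  have := Finset.card_le_card hcover
  have h2 := Finset.card_biUnion_le (s := (Finset.univ : Finset (Fin n))) (t := B)
  have h3 : ∑ i, (B i).card ≤ ∑ i, x i := Finset.sum_le_sum fun i _ => hcard i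
  simp [Finset.card_univ] at this
  omega
end

section
/- With Borda valuations over m candidates, n agents, and T rounds, if an outcome o satisfies the (m-1)-additive approximation of proportionality (u_i(o) + (m-1) >= T(m-1)/n for all i), then o satisfies (1/2)-Prop1: for every agent i there exists a round t such that u_i(o) - v_i^t(o^t) + (m-1) >= (1/2) * T(m-1)/n. -/
theorem stmt_5 (n m T : ℕ) (hn : 0 < n) (hT : 0 < T)
    (v : Fin T → Fin n → (Fin m ≃ Fin m)) (o : Fin T → Fin m)
    (h : ∀ i : Fin n,
      ((∑ t, ((v t i (o t) : Fin m) : ℕ) : ℕ) : ℝ) + ((m : ℝ) - 1)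
        ≥ (T : ℝ) * ((m : ℝ) - 1) / n) :
    ∀ i : Fin n, ∃ t : Fin T,
      ((∑ s, ((v s i (o s) : Fin m) : ℕ) : ℕ) : ℝ) - ((v t i (o t) : Fin m) : ℕ)
        + ((m : ℝ) - 1) ≥ (1 / 2) * ((T : ℝ) * ((m : ℝ) - 1) / n) := by
  intro i
  refine ⟨⟨0, hT⟩, ?_⟩
  set t : Fin T := ⟨0, hT⟩
  have hP := h i
  have hft : ((v t i (o t) : Fin m) : ℕ) < m := (v t i (o t)).isLt
  have hle : ((v t i (o t) : Fin m) : ℕ) ≤ ∑ s, ((v s i (o s) : Fin m) : ℕ) :=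
    Finset.single_le_sum (f := fun s => ((v s i (o s) : Fin m) : ℕ)) (fun s _ => Nat.zero_le _) (Finset.mem_univ t)
  have hftR : (((v t i (o t) : Fin m) : ℕ) : ℝ) ≤ (m : ℝ) - 1 := by
    have : (((v t i (o t) : Fin m) : ℕ) : ℝ) + 1 ≤ m := by exact_mod_cast hft
    linarith
  have hleR : (((v t i (o t) : Fin m) : ℕ) : ℝ)
      ≤ ((∑ s, ((v s i (o s) : Fin m) : ℕ) : ℕ) : ℝ) := by exact_mod_cast hle
  linarith
end

section
/- For any real number alpha with 0 < alpha < 1, there exists an instance with Borda valuations such that every outcome leaves some agent whose utility falls short of her proportional share by more than alpha. Concretely: for n = m agents/candidates, T = 1 round, with Borda valuations such that agent i assigns value 0 to candidate i for each i, any choice of a single winning candidate gives some agent utility 0 while Prop_i = (n-1)/n, and (n-1)/n > alpha when n is chosen large enough. -/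
theorem stmt_7 (α : ℝ) (hα0 : 0 < α) (hα1 : α < 1) :
    ∃ n : ℕ, 0 < n ∧ ∃ v : Fin n → (Fin n ≃ Fin n),
      (∀ i : Fin n, ((v i i : Fin n) : ℕ) = 0) ∧
      (∀ c : Fin n, ∃ i : Fin n,
        ((n : ℝ) - 1) / n - ((v i c : Fin n) : ℕ) > α) := by
  set n : ℕ := ⌈1 / (1 - α)⌉₊ + 1 with hn
  have hnpos : 0 < n := Nat.succ_pos _
  have h1α : (0:ℝ) < 1 - α := by linarith
  have hgt : (1:ℝ) / (1 - α) < n := by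
    calc (1:ℝ) / (1 - α) ≤ ⌈1 / (1 - α)⌉₊ := Nat.le_ceil _
    _ < n := by exact_mod_cast Nat.lt_succ_self _
  have hnR : (0:ℝ) < (n:ℝ) := by exact_mod_cast hnpos
  have key : ((n:ℝ) - 1) / n > α := by
    rw [gt_iff_lt, lt_div_iff₀ hnR]
    have : 1 < (1 - α) * n := by
      rw [div_lt_iff₀ h1α] at hgt; nlinarith
    nlinarith
  refine ⟨n, hnpos, fun i => Equiv.subRight i, fun i => ?_, fun c => ⟨c, ?_⟩⟩
  · simp [Equiv.subRight]
  · simpa [Equiv.subRight] using key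
end

section
/- Consider the online sequential setting with Borda valuations, n agents and m candidates. Define qProp^t = floor(t(m-1)/n) and rProp^t = (t(m-1)) mod n. Suppose after round t-1 every agent i has accumulated utility u_i >= qProp^{t-1}, and at least rProp^{t-1} agents have utility strictly greater than qProp^{t-1}. Then for any Borda valuation matrix at round t, there exists a candidate c such that after adding each agent's value for c, every agent has utility at least qProp^t and at least rProp^t agents have utility strictly greater than qProp^t. -/
open Finset

lemma count_perm_lt {m : ℕ} (e : Fin m ≃ Fin m) (k : ℕ) :
    (Finset.univ.filter fun c => ((e c : Fin m) : ℕ) < k).card ≤ k := by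
  classical
  have h := Finset.card_le_card_of_injOn (f := fun c : Fin m => ((e c : Fin m) : ℕ))
    (s := Finset.univ.filter fun c => ((e c : Fin m) : ℕ) < k) (t := Finset.range k)
    (by intro x hx; simp at hx ⊢; exact hx)
    (by intro x _ y _ hxy; exact e.injective (Fin.val_injective hxy))
  simpa using h

lemma swap_weights (p r n A B : ℕ) (h1 : r ≤ p) (h2 : p ≤ n) (h3 : A ≤ B) :
    p * A + (n - p) * B ≤ r * A + (n - r) * B := by
  obtain ⟨x, rfl⟩ := Nat.le.dest h1
  obtain ⟨y, rfl⟩ := Nat.le.dest h2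
  have e1 : r + x + y - (r + x) = y := by omega
  have e2 : r + x + y - r = x + y := by omega
  rw [e1, e2, add_mul, add_mul]
  have : r * A + x * A + y * B ≤ r * A + x * B + y * B := by gcongr
  linarith [this]

lemma final_ineq (n d r r2 e : ℕ) (hr : r < n) (hr2 : r2 < n) (heq : n * e + r2 = r + d) :
    r * (e + (n - r2) * (e - 1)) + (n - r) * ((e + 1) + (n - r2) * e) ≤ (d + 1) * (n - r2) + d := by
  obtain ⟨a, ha⟩ := Nat.le.dest hr.le
  obtain ⟨b, hb⟩ := Nat.le.dest hr2.le
  rw [show n - r = a by omega, show n - r2 = b by omega]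
  rcases e with _ | e'
  · have had : a = b + d := by omega
    have hb1 : b ≤ (d + 1) * b := Nat.le_mul_of_pos_left b (by omega)
    calc r * (0 + b * (0 - 1)) + a * ((0 + 1) + b * 0)
        = a := by ring_nf
      _ = b + d := had
      _ ≤ (d + 1) * b + d := Nat.add_le_add_right hb1 d
  · simp only [Nat.add_sub_cancel]
    have h1 : r * ((e' + 1) + b * e') + a * ((e' + 1 + 1) + b * (e' + 1)) + r2 * b
        = (d + 1) * b + d := by
      have heq' : (n : ℤ) * (e' + 1) + r2 = r + d := by exact_mod_cast heq
      have ha' : (r : ℤ) + a = n := by exact_mod_cast ha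
      have hb' : (r2 : ℤ) + b = n := by exact_mod_cast hb
      zify
      linear_combination ((b : ℤ) + 1) * heq' + ((e' : ℤ) + 2 + b * e' + b) * ha' - hb'
    exact le_of_le_of_eq (Nat.le_add_right _ (r2 * b)) h1

theorem stmt_9 (n m : ℕ) (hn : 0 < n) (hm : 0 < m) (t : ℕ)
    (u : Fin n → ℕ)
    (h1 : ∀ i : Fin n, t * (m - 1) / n ≤ u i)
    (h2 : t * (m - 1) % n ≤ (Finset.univ.filter (fun i : Fin n => t * (m - 1) / n < u i)).card)
    (v : Fin n → (Fin m ≃ Fin m)) :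
    ∃ c : Fin m,
      (∀ i : Fin n, (t + 1) * (m - 1) / n ≤ u i + ((v i c : Fin m) : ℕ)) ∧
      (t + 1) * (m - 1) % n ≤
        (Finset.univ.filter
          (fun i : Fin n => (t + 1) * (m - 1) / n < u i + ((v i c : Fin m) : ℕ))).card := by
  classical
  set d := m - 1 with hd
  set q := t * d / n with hq
  set r := t * d % n with hr
  set q2 := (t + 1) * d / n with hq2
  set r2 := (t + 1) * d % n with hr2
  have hrn : r < n := Nat.mod_lt _ hn
  have hr2n : r2 < n := Nat.mod_lt _ hn
  have hA : n * q + r = t * d := Nat.div_add_mod (t * d) n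
  have hB : n * q2 + r2 = t * d + d := by
    rw [hq2, hr2, show (t + 1) * d = t * d + d from by ring]
    exact Nat.div_add_mod (t * d + d) n
  have hqle : q ≤ q2 := Nat.div_le_div_right (by nlinarith)
  set e := q2 - q with he
  have hq2e : q2 = q + e := by omega
  have heq : n * e + r2 = r + d := by
    have hC : n * q2 = n * q + n * e := by rw [hq2e, Nat.mul_add]
    set X := n * q; set Y := n * q2; set Z := n * e
    omega
  -- counting functions
  set S : Fin m → ℕ :=
    fun c => (Finset.univ.filter fun i => u i + ((v i c : Fin m) : ℕ) ≤ q2).card with hS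
  set H : Fin m → ℕ :=
    fun c => (Finset.univ.filter fun i => u i + ((v i c : Fin m) : ℕ) < q2).card with hH
  -- swap sums
  have swapS : ∑ c, S c = ∑ i, (Finset.univ.filter fun c => u i + ((v i c : Fin m) : ℕ) ≤ q2).card := by
    simp only [hS, Finset.card_filter]
    exact Finset.sum_comm
  have swapH : ∑ c, H c = ∑ i, (Finset.univ.filter fun c => u i + ((v i c : Fin m) : ℕ) < q2).card := by
    simp only [hH, Finset.card_filter]
    exact Finset.sum_comm
  -- per agent bounds
  have sbound : ∀ i, (Finset.univ.filter fun c => u i + ((v i c : Fin m) : ℕ) ≤ q2).card ≤ q2 + 1 - u i := by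
    intro i
    have hfe : (Finset.univ.filter fun c => u i + ((v i c : Fin m) : ℕ) ≤ q2)
        = (Finset.univ.filter fun c => ((v i c : Fin m) : ℕ) < q2 + 1 - u i) := by
      apply Finset.filter_congr
      intro c _
      constructor <;> intro h <;> omega
    rw [hfe]; exact count_perm_lt (v i) _
  have hbound : ∀ i, (Finset.univ.filter fun c => u i + ((v i c : Fin m) : ℕ) < q2).card ≤ q2 - u i := by
    intro i
    have hfe : (Finset.univ.filter fun c => u i + ((v i c : Fin m) : ℕ) < q2)
        = (Finset.univ.filter fun c => ((v i c : Fin m) : ℕ) < q2 - u i) := by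
      apply Finset.filter_congr
      intro c _
      constructor <;> intro h <;> omega
    rw [hfe]; exact count_perm_lt (v i) _
  set G : ℕ → ℕ := fun w => (q2 + 1 - w) + (n - r2) * (q2 - w) with hG
  have totalF : ∑ c, (S c + (n - r2) * H c) ≤ ∑ i, G (u i) := by
    rw [Finset.sum_add_distrib, ← Finset.mul_sum]
    have t1 : ∑ c, S c ≤ ∑ i, (q2 + 1 - u i) :=
      swapS ▸ Finset.sum_le_sum fun i _ => sbound i
    have t2 : ∑ c, H c ≤ ∑ i, (q2 - u i) :=
      swapH ▸ Finset.sum_le_sum fun i _ => hbound i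
    calc ∑ c, S c + (n - r2) * ∑ c, H c
        ≤ (∑ i, (q2 + 1 - u i)) + (n - r2) * ∑ i, (q2 - u i) :=
          add_le_add t1 (Nat.mul_le_mul_left _ t2)
      _ = ∑ i, G (u i) := by rw [Finset.mul_sum, ← Finset.sum_add_distrib]
  have hGanti : ∀ w w', w ≤ w' → G w' ≤ G w := fun w w' h =>
    add_le_add (Nat.sub_le_sub_left h _) (Nat.mul_le_mul_left _ (Nat.sub_le_sub_left h _))
  set P := Finset.univ.filter fun i : Fin n => q < u i with hP
  have hPn : P.card ≤ n := by
    have := Finset.card_le_card (Finset.filter_subset (fun i : Fin n => q < u i) Finset.univ)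
    simpa using this
  have splitsum : ∑ i, G (u i) ≤ P.card * G (q + 1) + (n - P.card) * G q := by
    rw [← Finset.sum_filter_add_sum_filter_not Finset.univ (fun i => q < u i) (fun i => G (u i))]
    have c1 : ∑ i ∈ P, G (u i) ≤ P.card * G (q + 1) := by
      have := Finset.sum_le_card_nsmul P (fun i => G (u i)) (G (q + 1))
        (fun i hi => hGanti _ _ (by rw [hP] at hi; simp at hi; omega))
      simpa [smul_eq_mul] using this
    have hcard : (Finset.univ.filter fun i : Fin n => ¬ q < u i).card = n - P.card := by
      have hsp := Finset.card_filter_add_card_filter_not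
        (s := (Finset.univ : Finset (Fin n))) (p := fun i => q < u i)
      simp only [Finset.card_univ, Fintype.card_fin] at hsp
      rw [hP]
      omega
    have c2 : ∑ i ∈ Finset.univ.filter (fun i : Fin n => ¬ q < u i), G (u i)
        ≤ (n - P.card) * G q := by
      have := Finset.sum_le_card_nsmul (Finset.univ.filter fun i : Fin n => ¬ q < u i)
        (fun i => G (u i)) (G q) (fun i _ => hGanti _ _ (h1 i))
      rw [hcard] at this
      simpa [smul_eq_mul] using this
    exact add_le_add c1 c2
  have hsw : P.card * G (q + 1) + (n - P.card) * G q ≤ r * G (q + 1) + (n - r) * G q :=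
    swap_weights P.card r n (G (q + 1)) (G q) h2 hPn (hGanti q (q + 1) (Nat.le_succ q))
  have hGq : G q = (e + 1) + (n - r2) * e := by
    simp only [hG]
    rw [show q2 + 1 - q = e + 1 by omega, show q2 - q = e by omega]
  have hGq1 : G (q + 1) = e + (n - r2) * (e - 1) := by
    simp only [hG]
    rw [show q2 + 1 - (q + 1) = e by omega, show q2 - (q + 1) = e - 1 by omega]
  have grand : ∑ c, (S c + (n - r2) * H c) ≤ (d + 1) * (n - r2) + d := by
    calc ∑ c, (S c + (n - r2) * H c) ≤ ∑ i, G (u i) := totalF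
      _ ≤ P.card * G (q + 1) + (n - P.card) * G q := splitsum
      _ ≤ r * G (q + 1) + (n - r) * G q := hsw
      _ = r * (e + (n - r2) * (e - 1)) + (n - r) * ((e + 1) + (n - r2) * e) := by
          rw [hGq, hGq1]
      _ ≤ (d + 1) * (n - r2) + d := final_ineq n d r r2 e hrn hr2n heq
  have hmd : m = d + 1 := by omega
  have key : ∃ c, S c + (n - r2) * H c ≤ n - r2 := by
    by_contra hcon
    push_neg at hcon
    have hsum : ∑ _c : Fin m, (n - r2 + 1) ≤ ∑ c, (S c + (n - r2) * H c) :=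
      Finset.sum_le_sum fun c _ => hcon c
    rw [Finset.sum_const, Finset.card_univ, Fintype.card_fin, smul_eq_mul] at hsum
    have hchain := le_trans hsum grand
    rw [hmd, Nat.mul_add, Nat.mul_one] at hchain
    obtain ⟨X, hX⟩ : ∃ X, (d + 1) * (n - r2) = X := ⟨_, rfl⟩
    rw [hX] at hchain
    omega
  obtain ⟨c, hc⟩ := key
  have hHS : H c ≤ S c := by
    refine Finset.card_le_card ?_
    intro i hi
    simp only [Finset.mem_filter] at hi ⊢
    exact ⟨hi.1, le_of_lt hi.2⟩
  have hH0 : H c = 0 := by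
    by_contra h0
    have hge : 1 ≤ H c := Nat.one_le_iff_ne_zero.mpr h0
    have hX : n - r2 ≤ (n - r2) * H c := Nat.le_mul_of_pos_right _ hge
    obtain ⟨X, hXd⟩ : ∃ X, (n - r2) * H c = X := ⟨_, rfl⟩
    rw [hXd] at hX hc
    omega
  rw [hH0, Nat.mul_zero, Nat.add_zero] at hc
  refine ⟨c, ?_, ?_⟩
  · intro i
    by_contra hlt
    push_neg at hlt
    have hmem : i ∈ Finset.univ.filter fun j => u j + ((v j c : Fin m) : ℕ) < q2 := by
      simp [hlt]
    have hpos : 0 < (Finset.univ.filter fun j => u j + ((v j c : Fin m) : ℕ) < q2).card :=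
      Finset.card_pos.mpr ⟨i, hmem⟩
    have : (Finset.univ.filter fun j => u j + ((v j c : Fin m) : ℕ) < q2).card = 0 := hH0
    omega
  · have hcompl : (Finset.univ.filter fun i : Fin n => q2 < u i + ((v i c : Fin m) : ℕ)).card
        + S c = n := by
      have hsp := Finset.card_filter_add_card_filter_not
        (s := (Finset.univ : Finset (Fin n))) (p := fun i => q2 < u i + ((v i c : Fin m) : ℕ))
      simp only [not_lt, Finset.card_univ, Fintype.card_fin] at hsp
      exact hsp
    omega
end

section
/- In the sequential setting with Borda valuations over T rounds with n agents and m candidates, there exists an outcome (one candidate per round, chosen online round by round) such that every agent's total utility is at least floor(T(m-1)/n). In particular, every agent's utility is strictly greater than T(m-1)/n - 1, so this outcome is a 1-additive approximation of proportionality. -/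
/-!
After `t` rounds, agent `i` is owed `⌊(t (m-1) + i) / n⌋` points. The staggered offsets `i` make
these shares sum to exactly `t (m-1)` (Hermite's identity), so the increments owed in one round sum
to `m - 1`. A Borda valuation is a bijection onto `{0, …, m-1}`, so an agent demanding `g` points
rejects at most `g` candidates; as the total demand `m - 1` is less than `m`, some candidate meets
every demand, and choosing it in each round gives agent `i` at least
`⌊(T (m-1) + i) / n⌋ ≥ ⌊T (m-1) / n⌋`.
-/

open Finset

theorem Nat.sum_range_add_div {n : ℕ} (hn : 0 < n) (a : ℕ) :
    ∑ i ∈ range n, (a + i) / n = a := by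
  induction a with
  | zero => exact sum_eq_zero fun i hi => Nat.div_eq_of_lt (by simpa using hi)
  | succ a ih =>
    have shift := (sum_range_succ' (fun i => (a + i) / n) n).symm.trans (sum_range_succ _ n)
    simp only [ih, Nat.add_div_right _ hn, Nat.add_zero, ← add_assoc] at shift
    simp only [add_right_comm a 1]
    omega

theorem card_filter_lt_le_of_injective {α : Type*} [Fintype α] {f : α → ℕ}
    (hf : Function.Injective f) (k : ℕ) : #{c | f c < k} ≤ k := by
  simpa using card_le_card_of_injOn f (t := range k) (fun c hc => by simpa using hc)
    hf.injOn

theorem exists_forall_le_of_sum_lt {ι α : Type*} [Fintype ι] [Fintype α] (w : ι → α → ℕ)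
    (hw : ∀ i, Function.Injective (w i)) (g : ι → ℕ) (hg : ∑ i, g i < Fintype.card α) :
    ∃ c, ∀ i, g i ≤ w i c := by
  classical
  by_contra! h
  have hcover : (univ : Finset α) ⊆ univ.biUnion fun i => {c | w i c < g i} := fun c _ => by
    obtain ⟨i, hi⟩ := h c
    simpa using ⟨i, hi⟩
  have := calc Fintype.card α
      ≤ #(univ.biUnion fun i => {c | w i c < g i}) := card_le_card hcover
    _ ≤ ∑ i, #{c | w i c < g i} := card_biUnion_le
    _ ≤ ∑ i, g i := sum_le_sum fun i _ => card_filter_lt_le_of_injective (hw i) (g i)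
  omega

def cumulativeQuota (k n t i : ℕ) : ℕ := (t * k + i) / n

def roundQuota (k n t i : ℕ) : ℕ := cumulativeQuota k n (t + 1) i - cumulativeQuota k n t i

theorem cumulativeQuota_mono (k n i : ℕ) : Monotone fun t => cumulativeQuota k n t i :=
  fun _ _ hst => Nat.div_le_div_right (by gcongr)

theorem sum_cumulativeQuota {n : ℕ} (hn : 0 < n) (k t : ℕ) :
    ∑ i ∈ range n, cumulativeQuota k n t i = t * k :=
  Nat.sum_range_add_div hn (t * k)

theorem sum_roundQuota {n : ℕ} (hn : 0 < n) (k t : ℕ) :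
    ∑ i ∈ range n, roundQuota k n t i = k := by
  unfold roundQuota
  rw [sum_tsub_distrib _ fun i _ => cumulativeQuota_mono k n i t.le_succ,
    sum_cumulativeQuota hn, sum_cumulativeQuota hn, Nat.succ_mul, Nat.add_sub_cancel_left]

theorem sum_range_roundQuota {k n i : ℕ} (hi : i < n) (T : ℕ) :
    ∑ t ∈ range T, roundQuota k n t i = cumulativeQuota k n T i := by
  unfold roundQuota
  rw [sum_range_tsub (cumulativeQuota_mono k n i)]
  simp [cumulativeQuota, Nat.div_eq_of_lt hi]

theorem stmt_10 (n m T : ℕ) (hn : 0 < n) (hm : 0 < m)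
    (v : Fin T → Fin n → (Fin m ≃ Fin m)) :
    ∃ o : Fin T → Fin m, ∀ i : Fin n,
      T * (m - 1) / n ≤ ∑ t, ((v t i (o t) : Fin m) : ℕ) ∧
      (T : ℝ) * ((m : ℝ) - 1) / n - 1 < ((∑ t, ((v t i (o t) : Fin m) : ℕ) : ℕ) : ℝ) := by
  have hround (t : Fin T) : ∃ c, ∀ i : Fin n, roundQuota (m - 1) n t i ≤ v t i c := by
    refine exists_forall_le_of_sum_lt _ (fun i => Fin.val_injective.comp (v t i).injective) _ ?_
    rw [Fin.sum_univ_eq_sum_range (roundQuota (m - 1) n t), sum_roundQuota hn, Fintype.card_fin]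
    omega
  choose o ho using hround
  refine ⟨o, fun i => ?_⟩
  have hfloor : T * (m - 1) / n ≤ ∑ t, ((v t i (o t) : Fin m) : ℕ) := calc
    T * (m - 1) / n ≤ cumulativeQuota (m - 1) n T i := Nat.div_le_div_right (Nat.le_add_right _ _)
    _ = ∑ t : Fin T, roundQuota (m - 1) n t i := by
      rw [Fin.sum_univ_eq_sum_range (roundQuota (m - 1) n · i), sum_range_roundQuota i.isLt]
    _ ≤ _ := sum_le_sum fun t _ => ho t i
  refine ⟨hfloor, ?_⟩
  have hcast : (T : ℝ) * ((m : ℝ) - 1) = ((T * (m - 1) : ℕ) : ℝ) := by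
    push_cast [Nat.cast_sub hm]
    ring
  calc (T : ℝ) * ((m : ℝ) - 1) / n - 1 < ⌊(T : ℝ) * ((m : ℝ) - 1) / n⌋₊ := Nat.sub_one_lt_floor _
    _ = ((T * (m - 1) / n : ℕ) : ℝ) := by rw [hcast, Nat.floor_div_eq_div]
    _ ≤ _ := by exact_mod_cast hfloor
end

section
/- The leximin ordering is invariant under replication: for vectors x, y in R^n and positive integer k, if x is greater than y in the leximin ordering, then the k-fold concatenation of x is greater than the k-fold concatenation of y in the leximin ordering on R^{kn}. -/
noncomputable def sortedVec {n : ℕ} (x : Fin n → ℝ) : Fin n → ℝ := x ∘ Tuple.sort x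

def LexGT {n : ℕ} (x y : Fin n → ℝ) : Prop :=
  ∃ i : Fin n, (∀ j : Fin n, j < i → sortedVec x j = sortedVec y j) ∧
    sortedVec x i > sortedVec y i

lemma div_lt_of_lt_mul' {k n j : ℕ} (hk : 0 < k) (hj : j < k * n) : j / k < n :=
  Nat.div_lt_of_lt_mul hj

lemma rep_sorted {n k : ℕ} (hk : 0 < k) (x : Fin n → ℝ) (j : Fin (k * n)) :
    sortedVec (x ∘ (Fin.modNat : Fin (k * n) → Fin n)) j
      = sortedVec x ⟨j / k, div_lt_of_lt_mul' hk j.2⟩ := by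
  set σ : Equiv.Perm (Fin (k * n)) :=
    (finCongr (Nat.mul_comm k n)).trans
      (finProdFinEquiv.symm.trans
        (((Tuple.sort x).prodCongr (Equiv.refl (Fin k))).trans
          ((Equiv.prodComm _ _).trans finProdFinEquiv))) with hσ
  have h1 : (x ∘ (Fin.modNat : Fin (k * n) → Fin n)) ∘ σ
      = fun j : Fin (k * n) => sortedVec x ⟨j / k, div_lt_of_lt_mul' hk j.2⟩ := by
    funext j
    have hmod : (σ j).modNat = Tuple.sort x ((finCongr (Nat.mul_comm k n) j).divNat) := by
      apply Fin.ext
      simp only [hσ, Fin.coe_modNat, Equiv.trans_apply, Equiv.prodCongr_apply,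
        finProdFinEquiv_apply_val, finProdFinEquiv_symm_apply, Equiv.prodComm_apply,
        Prod.map, Equiv.refl_apply, Prod.swap, Prod.fst, Prod.snd]
      rw [Nat.add_mul_mod_self_left, Nat.mod_eq_of_lt (Fin.is_lt _)]
    have hdiv : (finCongr (Nat.mul_comm k n) j).divNat
        = (⟨j / k, div_lt_of_lt_mul' hk j.2⟩ : Fin n) := by
      apply Fin.ext
      simp [Fin.coe_divNat]
    simp only [Function.comp_apply, hmod, hdiv, sortedVec, Function.comp_apply]
  have h2 : Monotone ((x ∘ (Fin.modNat : Fin (k * n) → Fin n)) ∘ σ) := by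
    rw [h1]
    intro a b hab
    exact Tuple.monotone_sort x (show (⟨a / k, _⟩ : Fin n) ≤ ⟨b / k, _⟩ from
      Nat.div_le_div_right (Fin.le_def.mp hab))
  have := Tuple.unique_monotone (Tuple.monotone_sort (x ∘ Fin.modNat)) h2
  calc sortedVec (x ∘ (Fin.modNat : Fin (k * n) → Fin n)) j
      = ((x ∘ Fin.modNat) ∘ σ) j := congrFun this j
    _ = _ := congrFun h1 j

theorem stmt_13 (n k : ℕ) (hk : 0 < k) (x y : Fin n → ℝ)
    (h : LexGT x y) :
    LexGT (x ∘ (Fin.modNat : Fin (k * n) → Fin n))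
          (y ∘ (Fin.modNat : Fin (k * n) → Fin n)) := by
  obtain ⟨i, hpre, hlt⟩ := h
  have hIlt : (i : ℕ) * k < k * n := by
    have := i.2
    calc (i : ℕ) * k < n * k := (Nat.mul_lt_mul_right hk).mpr this
      _ = k * n := Nat.mul_comm n k
  refine ⟨⟨(i : ℕ) * k, hIlt⟩, ?_, ?_⟩
  · intro j hj
    rw [rep_sorted hk x, rep_sorted hk y]
    apply hpre
    rw [Fin.lt_def] at hj ⊢
    exact (Nat.div_lt_iff_lt_mul hk).mpr hj
  · rw [rep_sorted hk x, rep_sorted hk y]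
    have : (⟨(i : ℕ) * k / k, div_lt_of_lt_mul' hk hIlt⟩ : Fin n) = i := by
      apply Fin.ext; simp [Nat.mul_div_cancel _ hk]
    rw [this]; exact hlt
end

section
/- Any outcome maximizing a normalized leximin objective satisfies Max-Possible-Prop: let o be an outcome such that the vector (u_1(o)/P_1, ..., u_n(o)/P_n) is maximal in the leximin ordering over all outcomes, where P_i > 0 are fixed constants. Then for every alpha, if there exists an outcome o' with u_i(o') >= alpha * P_i for all i, then also u_i(o) >= alpha * P_i for all i. -/
theorem stmt_14 (n : ℕ) (O : Type*) [Fintype O]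
    (u : Fin n → O → ℝ) (hu : ∀ i o, 0 ≤ u i o)
    (P : Fin n → ℝ) (hP : ∀ i, 0 < P i)
    (o : O)
    (hmax : ∀ o' : O, ¬ LexGT (fun i => u i o' / P i) (fun i => u i o / P i)) :
    ∀ (α : ℝ) (o' : O), (∀ i, α * P i ≤ u i o') → ∀ i, α * P i ≤ u i o := by
  intro α o' h i
  by_contra hlt
  push_neg at hlt
  apply hmax o'
  set x : Fin n → ℝ := fun j => u j o' / P j with hx
  set y : Fin n → ℝ := fun j => u j o / P j with hy
  have hn : 0 < n := i.pos
  refine ⟨⟨0, hn⟩, fun j hj => absurd hj (by simp [Fin.lt_def]), ?_⟩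
  have hx0 : α ≤ sortedVec x ⟨0, hn⟩ := by
    have := h (Tuple.sort x ⟨0, hn⟩)
    simp only [sortedVec, Function.comp]
    rw [le_div_iff₀ (hP _)]; rw [mul_comm]
    linarith [this]
  have hy0 : sortedVec y ⟨0, hn⟩ < α := by
    have hkey : sortedVec y ⟨0, hn⟩ ≤ y i := by
      have : y i = sortedVec y ((Tuple.sort y).symm i) := by
        simp [sortedVec]
      rw [this]
      exact Tuple.monotone_sort y (Fin.mk_le_of_le_val (Nat.zero_le _))
    calc sortedVec y ⟨0, hn⟩ ≤ y i := hkey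
      _ < α := by rw [hy]; exact (div_lt_iff₀ (hP i)).mpr (by linarith)
  exact lt_of_lt_of_le hy0 hx0
end

section
/- Let n > 2, T, k be integers with 0 < T <= n(n-1)/2, and define for integer k in [0, T] the function f_k(x) = (k + T(n+1) - x) * x^{n-1} on the interval [k(n+1), (k+1)(n+1)]. Define f on [0, T(n+1)] piecewise by f(x) = f_k(x) for x in [k(n+1), (k+1)(n+1)). Then the unique maximizer of f on [0, T(n+1)] is x = T(n+1), with value T^n (n+1)^{n-1}. -/
/-!
For `x < T(n+1)`, `f x = (c - x) x^(n-1)` with `c = k + T(n+1)` and `k = ⌊x/(n+1)⌋ ≤ T - 1`.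
By AM-GM this is at most `(n-1)^(n-1) c^n / n^n`, and `2T ≤ n(n-1)` turns the bound on `c`
into `c n(n-1) ≤ T(n+1)(n²-2)`. The claim `f x < T^n (n+1)^(n-1)` then reduces to
`(n+1)(n²-2)^n < (n-1) n^(2n)`, i.e. `(1 + 2/(n²-2))^n > (n+1)/(n-1)`, which the
second-order Bernoulli inequality gives with a margin of `2(3n-4)/(n²-2)²`.
-/

theorem one_add_mul_add_choose_two_mul_sq_le_pow (n : ℕ) {t : ℝ} (ht : 0 ≤ t) :
    1 + n * t + n.choose 2 * t ^ 2 ≤ (1 + t) ^ n := by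
  induction n with
  | zero => simp
  | succ n ih =>
    have hstep := mul_le_mul_of_nonneg_right ih (by linarith : 0 ≤ 1 + t)
    have hcube : 0 ≤ (n.choose 2 : ℝ) * t ^ 3 := by positivity
    rw [Nat.choose_succ_succ, Nat.choose_one_right, pow_succ (1 + t) n]
    push_cast
    nlinarith

theorem add_one_mul_sq_sub_two_pow_lt (n : ℕ) (hn : 2 ≤ n) :
    ((n : ℝ) + 1) * ((n : ℝ) ^ 2 - 2) ^ n < ((n : ℝ) - 1) * ((n : ℝ) ^ 2) ^ n := by
  have hN : (2 : ℝ) ≤ n := by exact_mod_cast hn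
  have hD : 0 < (n : ℝ) ^ 2 - 2 := by nlinarith
  set N : ℝ := (n : ℝ)
  set t := 2 / (N ^ 2 - 2)
  have hbern := one_add_mul_add_choose_two_mul_sq_le_pow n (t := t) (by positivity)
  rw [Nat.cast_choose_two] at hbern
  have hgap : N + 1 < (N - 1) * (1 + N * t + N * (N - 1) / 2 * t ^ 2) := by
    have hexcess : (N - 1) * (1 + N * t + N * (N - 1) / 2 * t ^ 2) - (N + 1)
        = 2 * (3 * N - 4) / (N ^ 2 - 2) ^ 2 := by
      simp only [t]; field_simp; ring
    have : 0 < 2 * (3 * N - 4) / (N ^ 2 - 2) ^ 2 := by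
      apply div_pos <;> [linarith; positivity]
    linarith
  calc (N + 1) * (N ^ 2 - 2) ^ n
      < (N - 1) * (1 + N * t + N * (N - 1) / 2 * t ^ 2) * (N ^ 2 - 2) ^ n := by gcongr
    _ ≤ (N - 1) * (1 + t) ^ n * (N ^ 2 - 2) ^ n := by
      gcongr
      linarith
    _ = (N - 1) * (N ^ 2) ^ n := by
      rw [mul_assoc, ← mul_pow]
      congr 2
      simp only [t]; field_simp; ring

theorem pow_succ_add_mul_sub_mul_pow_le (n : ℕ) {u v : ℝ} (hu : 0 ≤ u) (hv : 0 ≤ v) :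
    v ^ (n + 1) + (n + 1) * (u - v) * v ^ n ≤ u ^ (n + 1) := by
  rcases hv.eq_or_lt with rfl | hv
  · cases n <;> simp [pow_succ]
    positivity
  have hratio : 1 + (u - v) / v = u / v := by field_simp; ring
  have hbern := one_add_mul_le_pow (a := (u - v) / v) (by linarith [div_nonneg hu hv.le]) (n + 1)
  rw [hratio, div_pow, le_div_iff₀ (by positivity)] at hbern
  calc v ^ (n + 1) + (n + 1) * (u - v) * v ^ n
      = (1 + ((n + 1 : ℕ) : ℝ) * ((u - v) / v)) * v ^ (n + 1) := by
        field_simp; push_cast; ring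
    _ ≤ u ^ (n + 1) := hbern

theorem pow_succ_mul_sub_mul_pow_le (n : ℕ) {c x : ℝ} (hx : 0 ≤ x) (hc : 0 ≤ c) :
    ((n : ℝ) + 1) ^ (n + 1) * ((c - x) * x ^ n) ≤ (n : ℝ) ^ n * c ^ (n + 1) := by
  rcases n.eq_zero_or_pos with rfl | hn
  · simpa using hx
  -- tangent line to `y ↦ y ^ (n + 1)` at `(n + 1) x`, evaluated at `n c`
  have htangent := pow_succ_add_mul_sub_mul_pow_le n (u := n * c) (v := (n + 1) * x)
    (by positivity) (by positivity)
  have hn' : (0 : ℝ) < n := by exact_mod_cast hn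
  refine le_of_mul_le_mul_left ?_ hn'
  calc (n : ℝ) * (((n : ℝ) + 1) ^ (n + 1) * ((c - x) * x ^ n))
      = ((n + 1) * x) ^ (n + 1) + (n + 1) * (n * c - (n + 1) * x) * ((n + 1) * x) ^ n := by
        simp only [mul_pow]; ring
    _ ≤ (n * c) ^ (n + 1) := htangent
    _ = n * (n ^ n * c ^ (n + 1)) := by rw [mul_pow]; ring

-- `(n-1)^(n-1) c^n < n^n T^n (n+1)^(n-1)` for `n = m + 1`
theorem pow_mul_pow_lt_of_mul_le (m : ℕ) (hm : 1 ≤ m) {T c : ℝ} (hT : 0 < T) (hc : 0 ≤ c)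
    (hcT : c * (((m : ℝ) + 1) * m) ≤ T * (m + 2) * (((m : ℝ) + 1) ^ 2 - 2)) :
    (m : ℝ) ^ m * c ^ (m + 1) < ((m : ℝ) + 1) ^ (m + 1) * (T ^ (m + 1) * ((m : ℝ) + 2) ^ m) := by
  have hmR : (1 : ℝ) ≤ m := by exact_mod_cast hm
  have hgap := add_one_mul_sq_sub_two_pow_lt (m + 1) (by omega)
  push_cast at hgap
  have hD : 0 ≤ ((m : ℝ) + 1) ^ 2 - 2 := by nlinarith
  have hscale : (0 : ℝ) < (((m : ℝ) + 1) * m) ^ (m + 1) := by positivity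
  refine lt_of_mul_lt_mul_right ?_ hscale.le
  calc (m : ℝ) ^ m * c ^ (m + 1) * (((m : ℝ) + 1) * m) ^ (m + 1)
      = (m : ℝ) ^ m * (c * (((m : ℝ) + 1) * m)) ^ (m + 1) := by rw [mul_pow c]; ring
    _ ≤ (m : ℝ) ^ m * (T * (m + 2) * (((m : ℝ) + 1) ^ 2 - 2)) ^ (m + 1) := by gcongr
    _ = (m : ℝ) ^ m * T ^ (m + 1) * ((m : ℝ) + 2) ^ m
          * (((m : ℝ) + 1 + 1) * (((m : ℝ) + 1) ^ 2 - 2) ^ (m + 1)) := by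
      rw [mul_pow, mul_pow, pow_succ ((m : ℝ) + 2)]; ring
    _ < (m : ℝ) ^ m * T ^ (m + 1) * ((m : ℝ) + 2) ^ m
          * (((m : ℝ) + 1 - 1) * ((((m : ℝ) + 1) ^ 2) ^ (m + 1))) := by gcongr
    _ = ((m : ℝ) + 1) ^ (m + 1) * (T ^ (m + 1) * ((m : ℝ) + 2) ^ m)
          * (((m : ℝ) + 1) * m) ^ (m + 1) := by
      rw [mul_pow, ← pow_mul, pow_mul']; ring

theorem stmt_18_general (n T : ℕ) (hT : 0 < T) (hTn : T ≤ n * (n - 1) / 2)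
    (f : ℝ → ℝ)
    (hf : ∀ x : ℝ, 0 ≤ x → x ≤ (T : ℝ) * ((n : ℝ) + 1) →
      f x = ((⌊x / ((n : ℝ) + 1)⌋₊ : ℝ) + (T : ℝ) * ((n : ℝ) + 1) - x) * x ^ (n - 1)) :
    f ((T : ℝ) * ((n : ℝ) + 1)) = (T : ℝ) ^ n * ((n : ℝ) + 1) ^ (n - 1) ∧
    ∀ x ∈ Set.Icc (0 : ℝ) ((T : ℝ) * ((n : ℝ) + 1)),
      x ≠ (T : ℝ) * ((n : ℝ) + 1) → f x < f ((T : ℝ) * ((n : ℝ) + 1)) := by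
  have h2T : 2 * T ≤ n * (n - 1) := by
    have := (Nat.le_div_iff_mul_le two_pos).mp hTn
    omega
  have hn : 2 ≤ n := by
    by_contra! h
    interval_cases n <;> omega
  obtain ⟨m, rfl⟩ : ∃ m, n = m + 1 := ⟨n - 1, by omega⟩
  have hm : 1 ≤ m := by omega
  have h2TR : 2 * (T : ℝ) ≤ ((m : ℝ) + 1) * m := by exact_mod_cast h2T
  have hm2 : ((m + 1 : ℕ) : ℝ) + 1 = m + 2 := by push_cast; ring
  simp only [hm2, Nat.add_sub_cancel] at hf ⊢
  have hval : f (T * (m + 2)) = T ^ (m + 1) * ((m : ℝ) + 2) ^ m := by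
    rw [hf _ (by positivity) le_rfl, mul_div_cancel_right₀ _ (by positivity), Nat.floor_natCast,
      mul_pow, pow_succ]
    ring
  refine ⟨hval, fun x ⟨hx0, hxT⟩ hne => ?_⟩
  set k := ⌊x / ((m : ℝ) + 2)⌋₊
  have hk : (k : ℝ) + 1 ≤ T := by
    have : k < T := by
      rw [Nat.floor_lt (by positivity), div_lt_iff₀ (by positivity)]
      exact lt_of_le_of_ne hxT hne
    exact_mod_cast this
  have hcT : (k + T * (m + 2)) * (((m : ℝ) + 1) * m) ≤ T * (m + 2) * (((m : ℝ) + 1) ^ 2 - 2) := by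
    nlinarith [mul_le_mul_of_nonneg_right hk (by positivity : (0 : ℝ) ≤ ((m : ℝ) + 1) * m)]
  rw [hf x hx0 hxT, hval]
  refine lt_of_mul_lt_mul_left ?_ (by positivity : (0 : ℝ) ≤ ((m : ℝ) + 1) ^ (m + 1))
  calc ((m : ℝ) + 1) ^ (m + 1) * ((k + T * (m + 2) - x) * x ^ m)
      ≤ (m : ℝ) ^ m * (k + T * (m + 2)) ^ (m + 1) :=
        pow_succ_mul_sub_mul_pow_le m hx0 (by positivity)
    _ < ((m : ℝ) + 1) ^ (m + 1) * (T ^ (m + 1) * ((m : ℝ) + 2) ^ m) :=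
        pow_mul_pow_lt_of_mul_le m hm (by positivity) (by positivity) hcT

theorem stmt_18 (n T : ℕ) (hn : 2 < n) (hT : 0 < T) (hTn : T ≤ n * (n - 1) / 2)
    (f : ℝ → ℝ)
    (hf : ∀ x : ℝ, 0 ≤ x → x ≤ (T : ℝ) * ((n : ℝ) + 1) →
      f x = ((⌊x / ((n : ℝ) + 1)⌋₊ : ℝ) + (T : ℝ) * ((n : ℝ) + 1) - x) * x ^ (n - 1)) :
    f ((T : ℝ) * ((n : ℝ) + 1)) = (T : ℝ) ^ n * ((n : ℝ) + 1) ^ (n - 1) ∧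
    ∀ x ∈ Set.Icc (0 : ℝ) ((T : ℝ) * ((n : ℝ) + 1)),
      x ≠ (T : ℝ) * ((n : ℝ) + 1) → f x < f ((T : ℝ) * ((n : ℝ) + 1)) :=
  stmt_18_general n T hT hTn f hf
end

section
/- For every integer n > 2: n^n * (n+1)^{n-1} > (n-1)^{n-1} * (n+2 - 2/(n(n-1)))^n. Equivalently, (1 + 2/(n^2-2))^n > (n+1)/(n-1). -/
/-!
Write `x = 2 / (n² - 2)`, so that `1 + x = n² / (n² - 2)`. The second inequality already follows
from the first three terms of the binomial expansion of `(1 + x) ^ n`, which exceed `(n + 1) / (n - 1)`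
as soon as `3 n > 4`. The first inequality is the second one multiplied by the positive factor
`(n + 1) ^ (n - 1) * ((n² - 2) / n) ^ n`, because `n + 2 - 2 / (n (n - 1)) = (n² - 2) (n + 1) / (n (n - 1))`.
-/

theorem one_add_mul_add_choose_two_mul_sq_le_pow_s19 {R : Type*} [CommSemiring R] [PartialOrder R]
    [IsOrderedRing R] {x : R} (hx : 0 ≤ x) (n : ℕ) :
    1 + n * x + n.choose 2 * x ^ 2 ≤ (1 + x) ^ n := by
  induction n with
  | zero => simp
  | succ k ih =>
    calc 1 + ↑(k + 1) * x + ↑((k + 1).choose 2) * x ^ 2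
        ≤ 1 + ↑(k + 1) * x + ↑((k + 1).choose 2) * x ^ 2 + k.choose 2 * x ^ 3 :=
          le_add_of_nonneg_right (by positivity)
      _ = (1 + k * x + k.choose 2 * x ^ 2) * (1 + x) := by
          rw [Nat.choose_succ_succ', Nat.choose_one_right]; push_cast; ring
      _ ≤ (1 + x) ^ k * (1 + x) := mul_le_mul_of_nonneg_right ih (add_nonneg zero_le_one hx)
      _ = (1 + x) ^ (k + 1) := (pow_succ _ _).symm

theorem add_one_div_sub_one_lt_one_add_mul_add_sq {m : ℝ} (hm : 0 < m) (hm2 : 2 < m ^ 2) :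
    (m + 1) / (m - 1) <
      1 + m * (2 / (m ^ 2 - 2)) + m * (m - 1) / 2 * (2 / (m ^ 2 - 2)) ^ 2 := by
  have hd : 0 < m ^ 2 - 2 := by linarith
  have hm1 : 0 < m - 1 := by nlinarith
  rw [div_lt_iff₀ hm1]
  field_simp
  nlinarith

theorem sub_one_pow_mul_lt_pow_mul_add_one_pow_iff {m : ℝ} (hm : 0 < m) (hm2 : 2 < m ^ 2) (k : ℕ) :
    (m - 1) ^ k * (m + 2 - 2 / (m * (m - 1))) ^ (k + 1) < m ^ (k + 1) * (m + 1) ^ k ↔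
      (m + 1) / (m - 1) < (1 + 2 / (m ^ 2 - 2)) ^ (k + 1) := by
  have hd : 0 < m ^ 2 - 2 := by linarith
  have hm1 : 0 < m - 1 := by nlinarith
  have hc : 0 < (m + 1) ^ k * ((m ^ 2 - 2) / m) ^ (k + 1) := by positivity
  have hlhs : (m - 1) ^ k * (m + 2 - 2 / (m * (m - 1))) ^ (k + 1) =
      (m + 1) ^ k * ((m ^ 2 - 2) / m) ^ (k + 1) * ((m + 1) / (m - 1)) := by
    have hbase : m + 2 - 2 / (m * (m - 1)) = (m ^ 2 - 2) / m * ((m + 1) / (m - 1)) := by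
      field_simp
      ring
    have hcancel : (m - 1) ^ k * ((m + 1) / (m - 1)) ^ k = (m + 1) ^ k := by
      rw [← mul_pow, mul_div_cancel₀ _ hm1.ne']
    rw [hbase, mul_pow, pow_succ ((m + 1) / (m - 1)), ← hcancel]
    ring
  have hrhs : m ^ (k + 1) * (m + 1) ^ k =
      (m + 1) ^ k * ((m ^ 2 - 2) / m) ^ (k + 1) * (1 + 2 / (m ^ 2 - 2)) ^ (k + 1) := by
    have hbase : (m ^ 2 - 2) / m * (1 + 2 / (m ^ 2 - 2)) = m := by
      field_simp
      ring
    rw [mul_assoc, ← mul_pow, hbase, mul_comm]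
  rw [hlhs, hrhs, mul_lt_mul_iff_of_pos_left hc]

theorem stmt_19 (n : ℕ) (hn : 2 < n) :
    (n : ℝ) ^ n * ((n : ℝ) + 1) ^ (n - 1) >
      ((n : ℝ) - 1) ^ (n - 1) * ((n : ℝ) + 2 - 2 / ((n : ℝ) * ((n : ℝ) - 1))) ^ n ∧
    (1 + 2 / ((n : ℝ) ^ 2 - 2)) ^ n > ((n : ℝ) + 1) / ((n : ℝ) - 1) := by
  have hm : (0 : ℝ) < n := by positivity
  have hm2 : (2 : ℝ) < (n : ℝ) ^ 2 := by
    have : (3 : ℝ) ≤ n := by exact_mod_cast hn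
    nlinarith
  have hbinom := one_add_mul_add_choose_two_mul_sq_le_pow_s19
    (div_nonneg zero_le_two (sub_pos.2 hm2).le) n
  rw [Nat.cast_choose_two] at hbinom
  have hsecond := (add_one_div_sub_one_lt_one_add_mul_add_sq hm hm2).trans_le hbinom
  refine ⟨?_, hsecond⟩
  obtain ⟨k, rfl⟩ : ∃ k, n = k + 1 := ⟨n - 1, by omega⟩
  exact (sub_one_pow_mul_lt_pow_mul_add_one_pow_iff hm hm2 k).2 hsecond
end
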